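/- Let μ > d + 1 where d ≥ 0 is an integer, β > 0, and let P be a polynomial with complex coefficients of degree at most d. Then there exists C > 0 such that for all f, g ∈ E_{(β,μ)}, the function m ↦ ∫_{-∞}^{∞} P(i(m−m₁)) f(m−m₁) g(m₁) dm₁ belongs to E_{(β,μ−d)} and its norm there is at most C ‖f‖_{(β,μ)} ‖g‖_{(β,μ)}. -/

import Mathlib

open MeasureTheory Real Complex

/-- The weight used to define the norm of `E_{(β,μ)}`. -/
noncomputable def Eweight (β μ : ℝ) (h : ℝ → ℂ) (m : ℝ) : ℝ :=
  (1 + |m|) ^ μ * Real.exp (β * |m|) * ‖h m‖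

/-- Membership in the space `E_{(β,μ)}`. -/
def MemE (β μ : ℝ) (h : ℝ → ℂ) : Prop :=
  Continuous h ∧ BddAbove (Set.range (Eweight β μ h))

/-- The norm `‖h‖_{(β,μ)}`. -/
noncomputable def Enorm (β μ : ℝ) (h : ℝ → ℂ) : ℝ :=
  ⨆ m : ℝ, Eweight β μ h m

/-!
An element of `E_{(β,μ)}` is bounded by its norm times `(1 + |x|)^{-μ} e^{-β|x|}`, and the factor
`P(ix)` costs at most `(1 + |x|)^d`; so `x ↦ P(ix) f(x)` lies in `E_{(β,μ-d)}`, and it suffices that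
convolution maps `E_{(β,p)} × E_{(β,q)}` into `E_{(β,p)}` when `1 < p ≤ q`. The exponential weights
are absorbed because `|m| ≤ |m - m₁| + |m₁|`. For the polynomial ones,
`(1 + |m|)^p ≤ 2^{p-1} ((1 + |m - m₁|)^p + (1 + |m₁|)^p)` and `(1 + |m₁|)^{p-q} ≤ 1` bound
`(1 + |m|)^p (1 + |m - m₁|)^{-p} (1 + |m₁|)^{-q}` by `2^{p-1}` times the sum of two integrable
functions of `m₁`, each of integral independent of `m`.
-/

noncomputable def Edecay (β μ x : ℝ) : ℝ :=
  (1 + |x|) ^ (-μ) * Real.exp (-(β * |x|))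

lemma Edecay_nonneg (β μ x : ℝ) : 0 ≤ Edecay β μ x := by
  unfold Edecay
  positivity

lemma Edecay_le_one_add_abs_rpow_neg {β : ℝ} (hβ : 0 ≤ β) (μ x : ℝ) :
    Edecay β μ x ≤ (1 + |x|) ^ (-μ) :=
  mul_le_of_le_one_right (by positivity)
    (Real.exp_le_one_iff.2 (neg_nonpos.2 (mul_nonneg hβ (abs_nonneg x))))

lemma Edecay_le_one {β μ : ℝ} (hβ : 0 ≤ β) (hμ : 0 ≤ μ) (x : ℝ) : Edecay β μ x ≤ 1 :=
  (Edecay_le_one_add_abs_rpow_neg hβ μ x).trans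
    (Real.rpow_le_one_of_one_le_of_nonpos (by linarith [abs_nonneg x]) (neg_nonpos.2 hμ))

lemma integrable_one_add_abs_rpow_neg {p : ℝ} (hp : 1 < p) :
    Integrable fun x : ℝ => (1 + |x|) ^ (-p) := by
  simpa using integrable_one_add_norm (E := ℝ) (μ := volume) (r := p) (by simpa using hp)

lemma rpow_mul_rpow_neg_mul_rpow_neg_le {p q A B M : ℝ} (hp : 1 ≤ p) (hpq : p ≤ q)
    (hA : 0 < A) (hB : 1 ≤ B) (hM : 0 ≤ M) (hMAB : M ≤ A + B) :
    M ^ p * (A ^ (-p) * B ^ (-q)) ≤ 2 ^ (p - 1) * (A ^ (-p) + B ^ (-q)) := by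
  have hB0 : 0 < B := by linarith
  have hMp : M ^ p ≤ 2 ^ (p - 1) * (A ^ p + B ^ p) := by
    refine (Real.rpow_le_rpow hM hMAB (by linarith)).trans ?_
    lift A to NNReal using hA.le
    lift B to NNReal using hB0.le
    exact_mod_cast NNReal.rpow_add_le_mul_rpow_add_rpow A B hp
  have hBpq : B ^ p * B ^ (-q) ≤ 1 := by
    rw [← Real.rpow_add hB0]
    exact Real.rpow_le_one_of_one_le_of_nonpos hB (by linarith)
  calc M ^ p * (A ^ (-p) * B ^ (-q))
      ≤ 2 ^ (p - 1) * (A ^ p + B ^ p) * (A ^ (-p) * B ^ (-q)) := by gcongr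
    _ = 2 ^ (p - 1) * (A ^ (-p) * (B ^ p * B ^ (-q)) + A ^ p * A ^ (-p) * B ^ (-q)) := by ring
    _ ≤ 2 ^ (p - 1) * (A ^ (-p) * 1 + 1 * B ^ (-q)) := by
      rw [← Real.rpow_add hA, add_neg_cancel, Real.rpow_zero]
      gcongr
    _ = 2 ^ (p - 1) * (A ^ (-p) + B ^ (-q)) := by ring

lemma rpow_mul_exp_mul_Edecay_mul_Edecay_le {β p q : ℝ} (hβ : 0 ≤ β) (hp : 1 ≤ p)
    (hpq : p ≤ q) (m m₁ : ℝ) :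
    (1 + |m|) ^ p * Real.exp (β * |m|) * (Edecay β p (m - m₁) * Edecay β q m₁) ≤
      2 ^ (p - 1) * ((1 + |m - m₁|) ^ (-p) + (1 + |m₁|) ^ (-q)) := by
  have htri : |m| ≤ |m - m₁| + |m₁| := by simpa using abs_add_le (m - m₁) m₁
  have hexp :
      Real.exp (β * |m|) * (Real.exp (-(β * |m - m₁|)) * Real.exp (-(β * |m₁|))) ≤ 1 := by
    rw [← Real.exp_add, ← Real.exp_add, Real.exp_le_one_iff]
    nlinarith [mul_le_mul_of_nonneg_left htri hβ]
  have hpoly := rpow_mul_rpow_neg_mul_rpow_neg_le hp hpq (A := 1 + |m - m₁|) (B := 1 + |m₁|)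
    (M := 1 + |m|) (by positivity) (by linarith [abs_nonneg m₁]) (by positivity) (by linarith)
  calc (1 + |m|) ^ p * Real.exp (β * |m|) * (Edecay β p (m - m₁) * Edecay β q m₁)
      = (1 + |m|) ^ p * ((1 + |m - m₁|) ^ (-p) * (1 + |m₁|) ^ (-q)) *
          (Real.exp (β * |m|) * (Real.exp (-(β * |m - m₁|)) * Real.exp (-(β * |m₁|)))) := by
        unfold Edecay
        ring
    _ ≤ 2 ^ (p - 1) * ((1 + |m - m₁|) ^ (-p) + (1 + |m₁|) ^ (-q)) * 1 := by
        gcongr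
    _ = 2 ^ (p - 1) * ((1 + |m - m₁|) ^ (-p) + (1 + |m₁|) ^ (-q)) := mul_one _

lemma Polynomial.norm_eval_le_of_natDegree_le {R : Type*} [SeminormedRing R] [NormOneClass R]
    {P : Polynomial R} {d : ℕ} (hP : P.natDegree ≤ d) (z : R) :
    ‖P.eval z‖ ≤ (∑ i ∈ Finset.range (d + 1), ‖P.coeff i‖) * (1 + ‖z‖) ^ d := by
  rw [Polynomial.eval_eq_sum_range' (Nat.lt_succ_of_le hP), Finset.sum_mul]
  refine (norm_sum_le _ _).trans (Finset.sum_le_sum fun i hi => ?_)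
  have hz : 1 ≤ 1 + ‖z‖ := le_add_of_nonneg_right (norm_nonneg z)
  calc ‖P.coeff i * z ^ i‖ ≤ ‖P.coeff i‖ * ‖z‖ ^ i :=
        (norm_mul_le _ _).trans (by gcongr; exact norm_pow_le z i)
    _ ≤ ‖P.coeff i‖ * (1 + ‖z‖) ^ d := by
        gcongr
        calc ‖z‖ ^ i ≤ (1 + ‖z‖) ^ i := by gcongr; linarith
          _ ≤ (1 + ‖z‖) ^ d := pow_le_pow_right₀ hz (Finset.mem_range_succ_iff.mp hi)

lemma Eweight_nonneg (β μ : ℝ) (h : ℝ → ℂ) (m : ℝ) : 0 ≤ Eweight β μ h m := by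
  unfold Eweight
  positivity

section WeightedSpace

variable {β μ : ℝ} {f : ℝ → ℂ}

lemma MemE.Enorm_nonneg (hf : MemE β μ f) : 0 ≤ Enorm β μ f :=
  (Eweight_nonneg β μ f 0).trans (le_ciSup hf.2 0)

lemma MemE.norm_le (hf : MemE β μ f) (x : ℝ) : ‖f x‖ ≤ Enorm β μ f * Edecay β μ x := by
  have hx : 0 < 1 + |x| := by positivity
  have hfx : (1 + |x|) ^ μ * Real.exp (β * |x|) * ‖f x‖ ≤ Enorm β μ f := le_ciSup hf.2 x
  rw [Edecay, Real.rpow_neg hx.le, Real.exp_neg, ← mul_inv, ← div_eq_mul_inv,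
    le_div_iff₀ (by positivity)]
  linarith

lemma memE_and_Enorm_le_of_Eweight_le {C : ℝ} (hc : Continuous f)
    (hC : ∀ m, Eweight β μ f m ≤ C) : MemE β μ f ∧ Enorm β μ f ≤ C :=
  ⟨⟨hc, C, Set.forall_mem_range.2 hC⟩, ciSup_le hC⟩

lemma MemE.mul_of_norm_le {k : ℝ → ℂ} {c d : ℝ} (hf : MemE β μ f) (hk : Continuous k)
    (hkc : ∀ x, ‖k x‖ ≤ c * (1 + |x|) ^ d) :
    MemE β (μ - d) (fun x => k x * f x) ∧
      Enorm β (μ - d) (fun x => k x * f x) ≤ c * Enorm β μ f := by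
  have hc : 0 ≤ c := by simpa using (norm_nonneg _).trans (hkc 0)
  refine memE_and_Enorm_le_of_Eweight_le (hk.mul hf.1) fun x => ?_
  have hx : 0 < 1 + |x| := by positivity
  calc Eweight β (μ - d) (fun x => k x * f x) x
      = (1 + |x|) ^ (μ - d) * Real.exp (β * |x|) * (‖k x‖ * ‖f x‖) := by
        rw [Eweight, norm_mul]
    _ ≤ (1 + |x|) ^ (μ - d) * Real.exp (β * |x|) * (c * (1 + |x|) ^ d * ‖f x‖) := by
        gcongr
        exact hkc x
    _ = c * Eweight β μ f x := by
        rw [Eweight, Real.rpow_sub hx]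
        field_simp
    _ ≤ c * Enorm β μ f := by
        gcongr
        exact le_ciSup hf.2 x

end WeightedSpace

section Convolution

variable {β p q : ℝ} {h g : ℝ → ℂ}

lemma norm_mul_sub_le_Edecay (hh : MemE β p h) (hg : MemE β q g) (m m₁ : ℝ) :
    ‖h (m - m₁) * g m₁‖ ≤
      Enorm β p h * Enorm β q g * (Edecay β p (m - m₁) * Edecay β q m₁) := by
  rw [norm_mul, mul_mul_mul_comm]
  exact mul_le_mul (hh.norm_le _) (hg.norm_le _) (norm_nonneg _)
    (mul_nonneg hh.Enorm_nonneg (Edecay_nonneg _ _ _))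

lemma continuous_integral_mul_sub (hβ : 0 ≤ β) (hp : 0 ≤ p) (hq : 1 < q) (hh : MemE β p h)
    (hg : MemE β q g) : Continuous fun m => ∫ m₁, h (m - m₁) * g m₁ := by
  have hh_cont : Continuous h := hh.1
  have hg_cont : Continuous g := hg.1
  refine continuous_of_dominated
    (bound := fun m₁ => Enorm β p h * Enorm β q g * (1 + |m₁|) ^ (-q))
    (fun m => (by fun_prop : Continuous fun m₁ => h (m - m₁) * g m₁).aestronglyMeasurable)
    (fun m => ae_of_all _ fun m₁ => (norm_mul_sub_le_Edecay hh hg m m₁).trans ?_)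
    ((integrable_one_add_abs_rpow_neg hq).const_mul _) (ae_of_all _ fun m₁ => by fun_prop)
  have hNN := mul_nonneg hh.Enorm_nonneg hg.Enorm_nonneg
  gcongr
  calc Edecay β p (m - m₁) * Edecay β q m₁ ≤ 1 * (1 + |m₁|) ^ (-q) :=
        mul_le_mul (Edecay_le_one hβ hp _) (Edecay_le_one_add_abs_rpow_neg hβ q m₁)
          (Edecay_nonneg _ _ _) zero_le_one
    _ = (1 + |m₁|) ^ (-q) := one_mul _

lemma Eweight_integral_mul_sub_le (hβ : 0 ≤ β) (hp : 1 < p) (hpq : p ≤ q) (hh : MemE β p h)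
    (hg : MemE β q g) (m : ℝ) :
    Eweight β p (fun m => ∫ m₁, h (m - m₁) * g m₁) m ≤
      2 ^ (p - 1) * ((∫ x : ℝ, (1 + |x|) ^ (-p)) + ∫ x : ℝ, (1 + |x|) ^ (-q)) *
        Enorm β p h * Enorm β q g := by
  set W := (1 + |m|) ^ p * Real.exp (β * |m|)
  have hNN := mul_nonneg hh.Enorm_nonneg hg.Enorm_nonneg
  have hIp := integrable_one_add_abs_rpow_neg hp
  have hIq := integrable_one_add_abs_rpow_neg (hp.trans_le hpq)
  have hmajorant : ∀ m₁, W * ‖h (m - m₁) * g m₁‖ ≤ Enorm β p h * Enorm β q g *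
      (2 ^ (p - 1) * ((1 + |m - m₁|) ^ (-p) + (1 + |m₁|) ^ (-q))) := fun m₁ =>
    calc W * ‖h (m - m₁) * g m₁‖
        ≤ W * (Enorm β p h * Enorm β q g * (Edecay β p (m - m₁) * Edecay β q m₁)) := by
          gcongr
          exact norm_mul_sub_le_Edecay hh hg m m₁
      _ = Enorm β p h * Enorm β q g * (W * (Edecay β p (m - m₁) * Edecay β q m₁)) := by ring
      _ ≤ _ := mul_le_mul_of_nonneg_left
          (rpow_mul_exp_mul_Edecay_mul_Edecay_le hβ hp.le hpq m m₁) hNN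
  calc Eweight β p (fun m => ∫ m₁, h (m - m₁) * g m₁) m
      = W * ‖∫ m₁, h (m - m₁) * g m₁‖ := rfl
    _ ≤ W * ∫ m₁, ‖h (m - m₁) * g m₁‖ := by
        gcongr
        exact norm_integral_le_integral_norm _
    _ = ∫ m₁, W * ‖h (m - m₁) * g m₁‖ := (integral_const_mul _ _).symm
    _ ≤ ∫ m₁, Enorm β p h * Enorm β q g *
          (2 ^ (p - 1) * ((1 + |m - m₁|) ^ (-p) + (1 + |m₁|) ^ (-q))) :=
        integral_mono_of_nonneg (ae_of_all _ fun _ => by positivity)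
          (((hIp.comp_sub_left m).add hIq).const_mul _ |>.const_mul _) (ae_of_all _ hmajorant)
    _ = _ := by
        rw [integral_const_mul, integral_const_mul, integral_add (hIp.comp_sub_left m) hIq,
          integral_sub_left_eq_self (fun x : ℝ => (1 + |x|) ^ (-p))]
        ring

theorem MemE.integral_mul_sub (hβ : 0 ≤ β) (hp : 1 < p) (hpq : p ≤ q) (hh : MemE β p h)
    (hg : MemE β q g) :
    MemE β p (fun m => ∫ m₁, h (m - m₁) * g m₁) ∧
      Enorm β p (fun m => ∫ m₁, h (m - m₁) * g m₁) ≤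
        2 ^ (p - 1) * ((∫ x : ℝ, (1 + |x|) ^ (-p)) + ∫ x : ℝ, (1 + |x|) ^ (-q)) *
          Enorm β p h * Enorm β q g :=
  memE_and_Enorm_le_of_Eweight_le
    (continuous_integral_mul_sub hβ (by linarith) (by linarith) hh hg)
    (Eweight_integral_mul_sub_le hβ hp hpq hh hg)

end Convolution

/-- For `μ > d+1`, `β > 0`, and a polynomial `P` of degree at most `d`, the bilinear map
`(f,g) ↦ (m ↦ ∫ P(i(m-m₁)) f(m-m₁) g(m₁) dm₁)` maps `E_{(β,μ)} × E_{(β,μ)}` continuously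
into `E_{(β,μ-d)}`. -/
theorem stmt17 (d : ℕ) (β μ : ℝ) (hβ : 0 < β) (hμ : (d : ℝ) + 1 < μ)
    (P : Polynomial ℂ) (hP : P.natDegree ≤ d) :
    ∃ C : ℝ, 0 < C ∧
      ∀ f g : ℝ → ℂ, MemE β μ f → MemE β μ g →
        MemE β (μ - d)
          (fun m => ∫ m₁ : ℝ, P.eval (Complex.I * ((m : ℂ) - (m₁ : ℂ))) * f (m - m₁) * g m₁) ∧
        Enorm β (μ - d)
          (fun m => ∫ m₁ : ℝ, P.eval (Complex.I * ((m : ℂ) - (m₁ : ℂ))) * f (m - m₁) * g m₁)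
          ≤ C * Enorm β μ f * Enorm β μ g := by
  set S := ∑ i ∈ Finset.range (d + 1), ‖P.coeff i‖
  set B := 2 ^ (μ - d - 1) * ((∫ x : ℝ, (1 + |x|) ^ (-(μ - d))) + ∫ x : ℝ, (1 + |x|) ^ (-μ))
  have hB : 0 ≤ B := by positivity
  refine ⟨B * S + 1, by positivity, fun f g hf hg => ?_⟩
  have hPI : ∀ x : ℝ, ‖P.eval (I * x)‖ ≤ S * (1 + |x|) ^ (d : ℝ) := fun x => by
    simpa using P.norm_eval_le_of_natDegree_le hP (I * x)
  obtain ⟨hPf, hPf_le⟩ := hf.mul_of_norm_le (by fun_prop) hPI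
  obtain ⟨hconv, hconv_le⟩ := hPf.integral_mul_sub hβ.le (by linarith) (by linarith) hg
  simp only [← ofReal_sub]
  refine ⟨hconv, hconv_le.trans ?_⟩
  have hNN := mul_nonneg hf.Enorm_nonneg hg.Enorm_nonneg
  calc B * Enorm β (μ - d) (fun x => P.eval (I * x) * f x) * Enorm β μ g
      ≤ B * (S * Enorm β μ f) * Enorm β μ g := by
        gcongr
        exact hg.Enorm_nonneg
    _ ≤ (B * S + 1) * Enorm β μ f * Enorm β μ g := by nlinarith
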